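/- Let S be an independent set of size 2 in the split-star S_n^2 with n ≥ 4. Then |N(S)| ≥ 4n - 8. -/

import Mathlib

/-- The 3-rotation `g_i^+` (rotate symbols at positions 1,2,i from left to right,
in 0-based indexing positions 0,1,i): swap positions 1,i then swap positions 0,1. -/
def gPlus (n : ℕ) [NeZero n] (i : Fin n) : Equiv.Perm (Fin n) :=
  Equiv.swap 1 i * Equiv.swap 0 1

/-- The 3-rotation `g_i^-` (rotate symbols at positions 1,2,i from right to left). -/
def gMinus (n : ℕ) [NeZero n] (i : Fin n) : Equiv.Perm (Fin n) :=
  Equiv.swap 0 i * Equiv.swap 0 1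

/-- The generating relation of the alternating group graph: `q` is obtained from `p`
by a 3-rotation `g_i^±` with `3 ≤ i ≤ n` (0-based: `2 ≤ i.val`). -/
def agRel (n : ℕ) [NeZero n] (p q : Equiv.Perm (Fin n)) : Prop :=
  ∃ i : Fin n, 2 ≤ i.val ∧ (q = p * gPlus n i ∨ q = p * gMinus n i)

/-- The alternating group graph `AG_n`, a Cayley graph on the even permutations. -/
def AG (n : ℕ) [NeZero n] :
    SimpleGraph {p : Equiv.Perm (Fin n) // Equiv.Perm.sign p = 1} :=
  SimpleGraph.fromRel (fun p q => agRel n p.1 q.1)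

/-- The split-star graph `S_n^2`, a Cayley graph on all permutations, with the
2-exchange `g_{12}` together with the 3-rotations as generators. -/
def SplitStar (n : ℕ) [NeZero n] : SimpleGraph (Equiv.Perm (Fin n)) :=
  SimpleGraph.fromRel (fun p q => q = p * Equiv.swap 0 1 ∨ agRel n p q)

/-- The (external) neighborhood of a vertex set. -/
def nbhd {V : Type*} (G : SimpleGraph V) (S : Set V) : Set V :=
  {v | v ∉ S ∧ ∃ u ∈ S, G.Adj u v}

/-- An independent set: pairwise nonadjacent vertices. -/
def IsIndep {V : Type*} (G : SimpleGraph V) (S : Set V) : Prop :=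
  ∀ u ∈ S, ∀ v ∈ S, ¬ G.Adj u v

/-- The `ℓ`-component connectivity: the minimum size of a vertex set `F` whose
removal results in a graph with at least `ℓ` components or fewer than `ℓ` vertices. -/
noncomputable def compConn {V : Type*} (G : SimpleGraph V) (l : ℕ) : ℕ :=
  sInf {k | ∃ F : Set V, F.ncard = k ∧
    (l ≤ Nat.card (G.induce Fᶜ).ConnectedComponent ∨ (Fᶜ : Set V).ncard < l)}


/-!
`S_n^2` is the Cayley graph of `S_n` for the inverse-closed set `T = {g_{12}} ∪ {g_i^±}` of
`2n - 3` generators, so every vertex has `2n - 3` neighbours, and for an independent pair the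
neighbourhood is `N(u) ∪ N(v)`. It remains to show that `u ≠ v` have at most two common
neighbours, i.e. that `|T ∩ xT| ≤ 2` for `x = u⁻¹v ≠ 1`.

Every `t ∈ T` is determined by `(t 0, t 1)` and satisfies `t 1 = 0` or `t 0 = 1`. Applying this
to `s` and `x⁻¹s` for `s ∈ T ∩ xT` leaves two possible pairs `(s 0, s 1)` unless `x` fixes `0`
or `1`. If `x 0 = 0`, the only candidates are `g_{12}` and `g^+_{x⁻¹(1)}`, because `g_m^+` sends
`m` to `1` while `x⁻¹s` fixes `m`. Conjugation by `g_{12}` preserves `T` and exchanges the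
positions `0` and `1`, which reduces the case `x 1 = 1` to the case `x 0 = 0`.
-/

open Equiv Pointwise

namespace Fin

lemma ncard_setOf_two_le_val (n : ℕ) : {m : Fin n | 2 ≤ m.val}.ncard = n - 2 := by
  have h := Set.ncard_add_ncard_compl {m : Fin n | 2 ≤ m.val}
  have hc : ({m : Fin n | 2 ≤ m.val}ᶜ).ncard = min n 2 := by
    rw [← Fin.card_filter_val_lt, ← Set.ncard_coe_finset]
    congr 1
    ext
    simp
  rw [hc, Nat.card_eq_fintype_card, Fintype.card_fin] at h
  omega

variable {n : ℕ} [NeZero n]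

lemma zero_ne_one_of_two_le (hn : 2 ≤ n) : (0 : Fin n) ≠ 1 := by
  intro h
  have := congrArg Fin.val h
  rw [Fin.val_zero, Fin.val_one', Nat.mod_eq_of_lt (by omega)] at this
  omega

lemma ne_zero_of_two_le_val {m : Fin n} (hm : 2 ≤ m.val) : m ≠ 0 := by
  rintro rfl
  simp at hm

lemma ne_one_of_two_le_val {m : Fin n} (hm : 2 ≤ m.val) : m ≠ 1 := by
  rintro rfl
  rw [Fin.val_one'] at hm
  have := Nat.mod_le 1 n
  omega

end Fin

lemma nbhd_pair_of_not_adj {V : Type*} {G : SimpleGraph V} {u v : V} (h : ¬ G.Adj u v) :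
    nbhd G {u, v} = G.neighborSet u ∪ G.neighborSet v := by
  ext w
  constructor
  · rintro ⟨-, z, rfl | rfl, hz⟩
    exacts [Or.inl hz, Or.inr hz]
  · rintro (hw | hw)
    · refine ⟨?_, u, Or.inl rfl, hw⟩
      rintro (rfl | rfl)
      exacts [G.irrefl hw, h hw]
    · refine ⟨?_, v, Or.inr rfl, hw⟩
      rintro (rfl | rfl)
      exacts [h hw.symm, G.irrefl hw]

namespace SplitStar

variable {n : ℕ} [NeZero n]

section generator

variable {m : Fin n}

lemma gPlus_apply_zero : gPlus n m 0 = m := by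
  simp [gPlus]

lemma gPlus_apply_one (hm : 2 ≤ m.val) : gPlus n m 1 = 0 := by
  simp [gPlus, swap_apply_of_ne_of_ne (Fin.zero_ne_one_of_two_le (by omega))
    (Fin.ne_zero_of_two_le_val hm).symm]

lemma gPlus_apply_self (hm : 2 ≤ m.val) : gPlus n m m = 1 := by
  simp [gPlus, swap_apply_of_ne_of_ne (Fin.ne_zero_of_two_le_val hm) (Fin.ne_one_of_two_le_val hm)]

lemma gPlus_apply_of_ne {j : Fin n} (h0 : j ≠ 0) (h1 : j ≠ 1) (hm : j ≠ m) :
    gPlus n m j = j := by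
  simp [gPlus, swap_apply_of_ne_of_ne, *]

lemma gMinus_apply_zero (hm : 2 ≤ m.val) : gMinus n m 0 = 1 := by
  simp [gMinus, swap_apply_of_ne_of_ne (Fin.zero_ne_one_of_two_le (by omega)).symm
    (Fin.ne_one_of_two_le_val hm).symm]

lemma gMinus_apply_one : gMinus n m 1 = m := by
  simp [gMinus]

lemma gMinus_apply_self (hm : 2 ≤ m.val) : gMinus n m m = 0 := by
  simp [gMinus, swap_apply_of_ne_of_ne (Fin.ne_zero_of_two_le_val hm) (Fin.ne_one_of_two_le_val hm)]

lemma gMinus_apply_of_ne {j : Fin n} (h0 : j ≠ 0) (h1 : j ≠ 1) (hm : j ≠ m) :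
    gMinus n m j = j := by
  simp [gMinus, swap_apply_of_ne_of_ne, *]

lemma gMinus_eq_swap_mul_swap (hm : 2 ≤ m.val) : gMinus n m = swap 0 1 * swap 1 m := by
  have := swap_apply_apply (swap (0 : Fin n) 1) 1 m
  rw [swap_apply_right, swap_inv,
    swap_apply_of_ne_of_ne (Fin.ne_zero_of_two_le_val hm) (Fin.ne_one_of_two_le_val hm)] at this
  rw [gMinus, this, mul_assoc, swap_mul_self, mul_one]

lemma inv_gPlus (hm : 2 ≤ m.val) : (gPlus n m)⁻¹ = gMinus n m := by
  rw [gPlus, gMinus_eq_swap_mul_swap hm, mul_inv_rev, swap_inv, swap_inv]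

lemma inv_gMinus (hm : 2 ≤ m.val) : (gMinus n m)⁻¹ = gPlus n m := by
  rw [← inv_gPlus hm, inv_inv]

lemma swap_mul_gPlus_mul_swap (hm : 2 ≤ m.val) :
    swap 0 1 * gPlus n m * swap 0 1 = gMinus n m := by
  rw [gPlus, gMinus_eq_swap_mul_swap hm, mul_assoc, mul_assoc, swap_mul_self, mul_one]

lemma swap_mul_gMinus_mul_swap (hm : 2 ≤ m.val) :
    swap 0 1 * gMinus n m * swap 0 1 = gPlus n m := by
  rw [gMinus_eq_swap_mul_swap hm, gPlus, ← mul_assoc, swap_mul_self, one_mul]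

end generator

def gens (n : ℕ) [NeZero n] : Set (Perm (Fin n)) :=
  insert (swap 0 1) (gPlus n '' {m | 2 ≤ m.val} ∪ gMinus n '' {m | 2 ≤ m.val})

lemma inv_mem_gens {s : Perm (Fin n)} (hs : s ∈ gens n) : s⁻¹ ∈ gens n := by
  rcases hs with rfl | ⟨m, hm, rfl⟩ | ⟨m, hm, rfl⟩
  · exact Or.inl (swap_inv _ _)
  · exact Or.inr (Or.inr ⟨m, hm, (inv_gPlus hm).symm⟩)
  · exact Or.inr (Or.inl ⟨m, hm, (inv_gMinus hm).symm⟩)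

lemma swap_mul_mul_swap_mem_gens {s : Perm (Fin n)} (hs : s ∈ gens n) :
    swap 0 1 * s * swap 0 1 ∈ gens n := by
  rcases hs with rfl | ⟨m, hm, rfl⟩ | ⟨m, hm, rfl⟩
  · exact Or.inl (by simp)
  · exact Or.inr (Or.inr ⟨m, hm, (swap_mul_gPlus_mul_swap hm).symm⟩)
  · exact Or.inr (Or.inl ⟨m, hm, (swap_mul_gMinus_mul_swap hm).symm⟩)

lemma one_notMem_gens (hn : 2 ≤ n) : 1 ∉ gens n := by
  rintro (h | ⟨m, hm, h⟩ | ⟨m, hm, h⟩)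
  · exact Fin.zero_ne_one_of_two_le hn (by simpa using congr($h 0))
  · exact Fin.ne_zero_of_two_le_val hm (by simpa [gPlus_apply_zero] using congr($h 0))
  · exact Fin.ne_one_of_two_le_val hm (by simpa [gMinus_apply_one] using congr($h 1))

lemma ncard_gens : (gens n).ncard = 2 * (n - 2) + 1 := by
  have hPlus : Set.InjOn (gPlus n) {m | 2 ≤ m.val} := fun a _ b _ h => by
    simpa [gPlus_apply_zero] using congr($h 0)
  have hMinus : Set.InjOn (gMinus n) {m | 2 ≤ m.val} := fun a _ b _ h => by
    simpa [gMinus_apply_one] using congr($h 1)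
  have hdisj : Disjoint (gPlus n '' {m | 2 ≤ m.val}) (gMinus n '' {m | 2 ≤ m.val}) := by
    rw [Set.disjoint_left]
    rintro _ ⟨a, ha, rfl⟩ ⟨b, hb, h⟩
    exact Fin.ne_zero_of_two_le_val hb
      (by simpa [gMinus_apply_one, gPlus_apply_one ha] using congr($h 1))
  have hswap : swap 0 1 ∉ gPlus n '' {m | 2 ≤ m.val} ∪ gMinus n '' {m | 2 ≤ m.val} := by
    rintro (⟨a, ha, h⟩ | ⟨a, ha, h⟩)
    · exact Fin.ne_one_of_two_le_val ha (by simpa [gPlus_apply_zero] using congr($h 0))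
    · exact Fin.ne_zero_of_two_le_val ha (by simpa [gMinus_apply_one] using congr($h 1))
  rw [gens, Set.ncard_insert_of_notMem hswap, Set.ncard_union_eq hdisj, hPlus.ncard_image,
    hMinus.ncard_image, Fin.ncard_setOf_two_le_val]
  ring

lemma apply_one_eq_zero_or_apply_zero_eq_one {s : Perm (Fin n)} (hs : s ∈ gens n) :
    s 1 = 0 ∨ s 0 = 1 := by
  rcases hs with rfl | ⟨m, hm, rfl⟩ | ⟨m, hm, rfl⟩
  · simp
  · exact Or.inl (gPlus_apply_one hm)
  · exact Or.inr (gMinus_apply_zero hm)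

/-- The first branch also covers `g_{12} = gPlus n 1`. -/
lemma eq_ite_of_mem_gens {s : Perm (Fin n)} (hs : s ∈ gens n) :
    s = if s 1 = 0 then gPlus n (s 0) else gMinus n (s 1) := by
  rcases hs with rfl | ⟨m, hm, rfl⟩ | ⟨m, hm, rfl⟩
  · simp [gPlus, swap_self, ← Perm.one_def]
  · simp [gPlus_apply_one hm, gPlus_apply_zero]
  · simp [gMinus_apply_one, Fin.ne_zero_of_two_le_val hm]

lemma eq_of_apply_zero_of_apply_one {s t : Perm (Fin n)} (hs : s ∈ gens n) (ht : t ∈ gens n)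
    (h0 : s 0 = t 0) (h1 : s 1 = t 1) : s = t := by
  rw [eq_ite_of_mem_gens hs, eq_ite_of_mem_gens ht, h0, h1]

lemma rel_iff_inv_mul_mem_gens {p q : Perm (Fin n)} :
    (q = p * swap 0 1 ∨ agRel n p q) ↔ p⁻¹ * q ∈ gens n := by
  constructor
  · rintro (rfl | ⟨m, hm, rfl | rfl⟩) <;> rw [inv_mul_cancel_left]
    · exact Or.inl rfl
    · exact Or.inr (Or.inl ⟨m, hm, rfl⟩)
    · exact Or.inr (Or.inr ⟨m, hm, rfl⟩)
  · rintro (h | ⟨m, hm, h⟩ | ⟨m, hm, h⟩)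
    · exact Or.inl (inv_mul_eq_iff_eq_mul.mp h)
    · exact Or.inr ⟨m, hm, Or.inl (inv_mul_eq_iff_eq_mul.mp h.symm)⟩
    · exact Or.inr ⟨m, hm, Or.inr (inv_mul_eq_iff_eq_mul.mp h.symm)⟩

lemma adj_iff_inv_mul_mem_gens (hn : 2 ≤ n) {p q : Perm (Fin n)} :
    (SplitStar n).Adj p q ↔ p⁻¹ * q ∈ gens n := by
  rw [SplitStar, SimpleGraph.fromRel_adj, rel_iff_inv_mul_mem_gens, rel_iff_inv_mul_mem_gens]
  have hsymm : q⁻¹ * p ∈ gens n ↔ p⁻¹ * q ∈ gens n := by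
    constructor <;> intro h <;> simpa using inv_mem_gens h
  rw [hsymm, or_self, and_iff_right_iff_imp]
  rintro h rfl
  exact one_notMem_gens hn (by simpa using h)

lemma neighborSet_eq_smul_gens (hn : 2 ≤ n) (p : Perm (Fin n)) :
    (SplitStar n).neighborSet p = p • gens n := by
  ext q
  rw [SimpleGraph.mem_neighborSet, adj_iff_inv_mul_mem_gens hn,
    Set.mem_smul_set_iff_inv_smul_mem, smul_eq_mul]

lemma ncard_neighborSet (hn : 2 ≤ n) (p : Perm (Fin n)) :
    ((SplitStar n).neighborSet p).ncard = 2 * n - 3 := by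
  rw [neighborSet_eq_smul_gens hn, Set.ncard_smul_set, ncard_gens]
  omega

lemma ncard_le_two_of_subset_gens {A : Set (Perm (Fin n))} (hA : A ⊆ gens n)
    (a b : Fin n × Fin n) (h : ∀ s ∈ A, (s 0, s 1) = a ∨ (s 0, s 1) = b) : A.ncard ≤ 2 := by
  have hinj : Set.InjOn (fun s : Perm (Fin n) => (s 0, s 1)) A := fun s hs t ht hst =>
    eq_of_apply_zero_of_apply_one (hA hs) (hA ht) congr($hst.1) congr($hst.2)
  calc A.ncard ≤ ({a, b} : Set (Fin n × Fin n)).ncard :=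
        Set.ncard_le_ncard_of_injOn _ (fun s hs => h s hs) hinj
    _ ≤ 2 := (Set.ncard_insert_le a {b}).trans (by rw [Set.ncard_singleton])

lemma ncard_gens_inter_smul_le_two_of_apply_ne {x : Perm (Fin n)} (h0 : x 0 ≠ 0)
    (h1 : x 1 ≠ 1) : (gens n ∩ x • gens n).ncard ≤ 2 := by
  refine ncard_le_two_of_subset_gens Set.inter_subset_left (x 1, 0) (1, x 0) ?_
  rintro s ⟨hs, hxs⟩
  have hw := apply_one_eq_zero_or_apply_zero_eq_one (Set.mem_smul_set_iff_inv_smul_mem.mp hxs)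
  simp only [smul_eq_mul, Perm.mul_apply, Perm.inv_eq_iff_eq] at hw
  rcases apply_one_eq_zero_or_apply_zero_eq_one hs with hs1 | hs0 <;> grind

lemma ncard_gens_inter_smul_le_two_of_apply_zero {x : Perm (Fin n)} (hx : x ≠ 1)
    (h0 : x 0 = 0) : (gens n ∩ x • gens n).ncard ≤ 2 := by
  refine ncard_le_two_of_subset_gens Set.inter_subset_left (1, 0) (x⁻¹ 1, 0) ?_
  rintro s ⟨hs, w, hw, rfl⟩
  simp only [smul_eq_mul] at hs ⊢
  have hxw : x * w ≠ w := fun h => hx (mul_eq_right.mp h)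
  rcases hs with hs | ⟨m, hm, hs⟩ | ⟨m, hm, hs⟩
  · left
    simp [hs]
  · right
    have hwm : w m = m := by
      rcases hw with rfl | ⟨a, ha, rfl⟩ | ⟨a, ha, rfl⟩
      · exact swap_apply_of_ne_of_ne (Fin.ne_zero_of_two_le_val hm) (Fin.ne_one_of_two_le_val hm)
      · refine gPlus_apply_of_ne (Fin.ne_zero_of_two_le_val hm) (Fin.ne_one_of_two_le_val hm) ?_
        rintro rfl
        exact hxw hs.symm
      · have h1 := congr($hs 1)
        rw [Perm.mul_apply, gPlus_apply_one hm, gMinus_apply_one, ← h0] at h1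
        exact absurd (x.injective h1.symm) (Fin.ne_zero_of_two_le_val ha)
    have hxm : x m = 1 := by
      simpa [hwm, gPlus_apply_self hm] using congr($hs m).symm
    rw [← hs, gPlus_apply_zero, gPlus_apply_one hm, Perm.inv_eq_iff_eq.mpr hxm.symm]
  · exfalso
    rcases hw with rfl | ⟨a, ha, rfl⟩ | ⟨a, ha, rfl⟩
    · have h1 := congr($hs 1)
      rw [Perm.mul_apply, gMinus_apply_one, swap_apply_right, h0] at h1
      exact Fin.ne_zero_of_two_le_val hm h1
    · have h1 := congr($hs 1)
      rw [Perm.mul_apply, gMinus_apply_one, gPlus_apply_one ha, h0] at h1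
      exact Fin.ne_zero_of_two_le_val hm h1
    · have hma : m ≠ a := by
        rintro rfl
        exact hxw hs.symm
      have ha' := congr($hs a)
      rw [Perm.mul_apply, gMinus_apply_self ha, h0, gMinus_apply_of_ne
        (Fin.ne_zero_of_two_le_val ha) (Fin.ne_one_of_two_le_val ha) hma.symm] at ha'
      exact Fin.ne_zero_of_two_le_val ha ha'

lemma ncard_gens_inter_smul_le_swap_conj (x : Perm (Fin n)) :
    (gens n ∩ x • gens n).ncard ≤ (gens n ∩ (swap 0 1 * x * swap 0 1) • gens n).ncard := by
  refine Set.ncard_le_ncard_of_injOn (fun s => swap 0 1 * s * swap 0 1) ?_ ?_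
  · rintro s ⟨hs, hxs⟩
    refine ⟨swap_mul_mul_swap_mem_gens hs, Set.mem_smul_set_iff_inv_smul_mem.mpr ?_⟩
    simpa [mul_assoc] using
      swap_mul_mul_swap_mem_gens (Set.mem_smul_set_iff_inv_smul_mem.mp hxs)
  · intro s _ t _ h
    simpa using h

lemma ncard_gens_inter_smul_le_two {x : Perm (Fin n)} (hx : x ≠ 1) :
    (gens n ∩ x • gens n).ncard ≤ 2 := by
  by_cases h0 : x 0 = 0
  · exact ncard_gens_inter_smul_le_two_of_apply_zero hx h0
  by_cases h1 : x 1 = 1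
  · refine (ncard_gens_inter_smul_le_swap_conj x).trans
      (ncard_gens_inter_smul_le_two_of_apply_zero ?_ (by simp [h1]))
    exact fun h => hx (conj_eq_one_iff.mp (by rwa [swap_inv]))
  · exact ncard_gens_inter_smul_le_two_of_apply_ne h0 h1

lemma ncard_commonNeighbors_le_two (hn : 2 ≤ n) {u v : Perm (Fin n)} (huv : u ≠ v) :
    ((SplitStar n).commonNeighbors u v).ncard ≤ 2 := by
  have hv : v • gens n = u • (u⁻¹ * v) • gens n := by rw [smul_smul, mul_inv_cancel_left]
  rw [SimpleGraph.commonNeighbors, neighborSet_eq_smul_gens hn, neighborSet_eq_smul_gens hn, hv,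
    ← Set.smul_set_inter, Set.ncard_smul_set]
  exact ncard_gens_inter_smul_le_two fun h => huv (inv_mul_eq_one.mp h)

end SplitStar

theorem stmt_13 (n : ℕ) [NeZero n] (hn : 4 ≤ n)
    (S : Set (Equiv.Perm (Fin n)))
    (hcard : S.ncard = 2) (hind : IsIndep (SplitStar n) S) :
    4 * n - 8 ≤ (nbhd (SplitStar n) S).ncard := by
  obtain ⟨u, v, huv, rfl⟩ := Set.ncard_eq_two.mp hcard
  have hn2 : 2 ≤ n := by omega
  have hunion := Set.ncard_union_add_ncard_inter
    ((SplitStar n).neighborSet u) ((SplitStar n).neighborSet v)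
  have hcommon : ((SplitStar n).neighborSet u ∩ (SplitStar n).neighborSet v).ncard ≤ 2 :=
    SplitStar.ncard_commonNeighbors_le_two hn2 huv
  rw [SplitStar.ncard_neighborSet hn2, SplitStar.ncard_neighborSet hn2] at hunion
  rw [nbhd_pair_of_not_adj (hind u (by simp) v (by simp))]
  omega
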